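/- Assume 0 < θ ≤ 6/25 and let 0 < c⋆ < C⋆ with C⋆ ≤ 12/25 − 2θ. Let q ∈ ℝ^p be a unit vector with c⋆ < ‖Aᵀq‖_∞² < C⋆, and suppose ‖Hess F(q) − Hess f(q)‖_op ≤ δ₂ with δ₂ ≤ c⋆/25. Then there exists v ∈ ℝ^p with vᵀ Hess F(q) v < 0. In particular, if θ ≤ 1/9 and C⋆ ≤ 1/4, there exists a unit vector v with vᵀ Hess F(q) v < −(21/100)‖Aᵀq‖_∞² < −c⋆/5. -/

import Mathlib

open Matrix MeasureTheory ProbabilityTheory Real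
open scoped BigOperators ENNReal

noncomputable section

/-- squared Euclidean norm -/
def l2sq {m : ℕ} (v : Fin m → ℝ) : ℝ := ∑ i, v i ^ 2

/-- fourth power of the ℓ₄ norm -/
def l4p4 {m : ℕ} (v : Fin m → ℝ) : ℝ := ∑ i, v i ^ 4

/-- Euclidean norm -/
def l2norm {m : ℕ} (v : Fin m → ℝ) : ℝ := Real.sqrt (l2sq v)

/-- squared sup-norm -/
def linfSq {m : ℕ} (v : Fin m → ℝ) : ℝ := ⨆ i, (v i) ^ 2

/-- projection onto the orthogonal complement of q -/
def proj {p : ℕ} (q : Fin p → ℝ) : Matrix (Fin p) (Fin p) ℝ := 1 - Matrix.vecMulVec q q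

def zeta {p r : ℕ} (A : Matrix (Fin p) (Fin r) ℝ) (q : Fin p → ℝ) : Fin r → ℝ := Aᵀ *ᵥ q

/-- population objective -/
def fpop {p r : ℕ} (θ : ℝ) (A : Matrix (Fin p) (Fin r) ℝ) (q : Fin p → ℝ) : ℝ :=
  -(1/4) * ((1 - θ) * l4p4 (zeta A q) + θ * (l2sq (zeta A q)) ^ 2)

/-- Riemannian gradient of the population objective -/
def gradf {p r : ℕ} (θ : ℝ) (A : Matrix (Fin p) (Fin r) ℝ) (q : Fin p → ℝ) : Fin p → ℝ :=
  -((proj q) *ᵥ ((1 - θ) • (A *ᵥ fun j => (zeta A q j) ^ 3)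
      + (θ * l2sq (zeta A q)) • (A *ᵥ zeta A q)))

/-- Riemannian Hessian of the population objective -/
def hessf {p r : ℕ} (θ : ℝ) (A : Matrix (Fin p) (Fin r) ℝ) (q : Fin p → ℝ) :
    Matrix (Fin p) (Fin p) ℝ :=
  -((1 - θ) • (proj q *
      ((3 : ℝ) • (A * Matrix.diagonal (fun j => (zeta A q j) ^ 2) * Aᵀ)
        - l4p4 (zeta A q) • (1 : Matrix (Fin p) (Fin p) ℝ)) * proj q))
  - θ • (proj q *
      (l2sq (zeta A q) • (A * Aᵀ)
        + (2 : ℝ) • (A * Aᵀ * Matrix.vecMulVec q q * (A * Aᵀ))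
        - (l2sq (zeta A q)) ^ 2 • (1 : Matrix (Fin p) (Fin p) ℝ)) * proj q)

/-- quadratic form -/
def qform {p : ℕ} (M : Matrix (Fin p) (Fin p) ℝ) (v : Fin p → ℝ) : ℝ := v ⬝ᵥ (M *ᵥ v)

/-- α(q) -/
def alphaf {p r : ℕ} (θ : ℝ) (A : Matrix (Fin p) (Fin r) ℝ) (q : Fin p → ℝ) : ℝ :=
  l4p4 (zeta A q) + (θ / (1 - θ)) * ((l2sq (zeta A q)) ^ 2 - l2sq (zeta A q))

/-- columns of X -/
def colX {r n : ℕ} (X : Matrix (Fin r) (Fin n) ℝ) (k : Fin n) : Fin r → ℝ := fun i => X i k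

/-- finite-sample objective -/
def Ffun {p r n : ℕ} (θ σ : ℝ) (A : Matrix (Fin p) (Fin r) ℝ) (X : Matrix (Fin r) (Fin n) ℝ)
    (q : Fin p → ℝ) : ℝ :=
  -(1 / (12 * θ * σ ^ 4 * n)) * ∑ k : Fin n, (q ⬝ᵥ (A *ᵥ colX X k)) ^ 4

/-- Riemannian gradient of the finite-sample objective -/
def gradF {p r n : ℕ} (θ σ : ℝ) (A : Matrix (Fin p) (Fin r) ℝ) (X : Matrix (Fin r) (Fin n) ℝ)
    (q : Fin p → ℝ) : Fin p → ℝ :=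
  (-(1 / (3 * θ * σ ^ 4 * n))) •
    ((proj q) *ᵥ ∑ k : Fin n, ((q ⬝ᵥ (A *ᵥ colX X k)) ^ 3) • (A *ᵥ colX X k))

/-- Riemannian Hessian of the finite-sample objective -/
def hessF {p r n : ℕ} (θ σ : ℝ) (A : Matrix (Fin p) (Fin r) ℝ) (X : Matrix (Fin r) (Fin n) ℝ)
    (q : Fin p → ℝ) : Matrix (Fin p) (Fin p) ℝ :=
  (-(1 / (3 * θ * σ ^ 4 * n))) •
    ∑ k : Fin n, proj q *
      ((3 * (q ⬝ᵥ (A *ᵥ colX X k)) ^ 2) • Matrix.vecMulVec (A *ᵥ colX X k) (A *ᵥ colX X k)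
        - ((q ⬝ᵥ (A *ᵥ colX X k)) ^ 4) • (1 : Matrix (Fin p) (Fin p) ℝ)) * proj q

/-- spectral norm of a rectangular matrix -/
def opNorm {m n : ℕ} (M : Matrix (Fin m) (Fin n) ℝ) : ℝ :=
  ‖LinearMap.toContinuousLinearMap (Matrix.toEuclideanLin M)‖

/-- Bernoulli(θ) law on ℝ -/
def bernoulliReal (θ : ℝ) : Measure ℝ :=
  ENNReal.ofReal θ • Measure.dirac (1 : ℝ) + ENNReal.ofReal (1 - θ) • Measure.dirac (0 : ℝ)

/-- Bernoulli–Gaussian law BG(θ, σ²) on ℝ -/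
def bgLaw (θ σ2 : ℝ) : Measure ℝ :=
  ((bernoulliReal θ).prod (gaussianReal 0 σ2.toNNReal)).map fun p => p.1 * p.2

/-- law of a random vector in ℝ^r with i.i.d. BG(θ, σ²) entries -/
def bgVec (r : ℕ) (θ σ2 : ℝ) : Measure (Fin r → ℝ) :=
  Measure.pi fun _ : Fin r => bgLaw θ σ2

/-- law of a random r×n matrix with i.i.d. BG(θ, σ²) entries -/
def bgMatrix (r n : ℕ) (θ σ2 : ℝ) : Measure (Fin r → Fin n → ℝ) :=
  Measure.pi fun _ : Fin r => Measure.pi fun _ : Fin n => bgLaw θ σ2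

/-! The negative-curvature direction is `w = P a_i`, the projection onto `q⊥` of the column `a_i`
of `A` maximising `|⟨a_i, q⟩|`. With `s = ζ_i²`, `t = ‖ζ‖₂²`, `u = ‖ζ‖₄⁴` one has `‖w‖² = 1 - s`
and `Aᵀ w = e_i - ζ_i ζ`, so `wᵀ Hess f(q) w` is an explicit polynomial in `θ, s, t, u`. Since
`s ≤ t ≤ 1` and `s² ≤ u ≤ s t`, it is at most `-(1 - θ) s (1 - s)` once `s ≤ 1/2`. After
normalising `w` the population curvature is at most `-(1 - θ) s ≤ -s/4`, and replacing
`Hess f` by `Hess F` costs at most `δ₂ < s/25`. -/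

theorem l2sq_eq_dotProduct {m : ℕ} (v : Fin m → ℝ) : l2sq v = v ⬝ᵥ v := by
  simp [l2sq, dotProduct, sq]

theorem exists_linfSq_eq {m : ℕ} [Nonempty (Fin m)] (v : Fin m → ℝ) :
    ∃ i, (∀ j, v j ^ 2 ≤ v i ^ 2) ∧ linfSq v = v i ^ 2 := by
  obtain ⟨i, hi⟩ := Finite.exists_max fun j => v j ^ 2
  exact ⟨i, hi, le_antisymm (ciSup_le hi)
    (le_ciSup (f := fun j => v j ^ 2) (Set.finite_range _).bddAbove i)⟩

theorem sq_le_l2sq {m : ℕ} (v : Fin m → ℝ) (i : Fin m) : v i ^ 2 ≤ l2sq v :=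
  Finset.single_le_sum (f := fun j => v j ^ 2) (fun _ _ => sq_nonneg _) (Finset.mem_univ i)

theorem sq_sq_le_l4p4 {m : ℕ} (v : Fin m → ℝ) (i : Fin m) : (v i ^ 2) ^ 2 ≤ l4p4 v := by
  rw [← pow_mul]
  exact Finset.single_le_sum (f := fun j => v j ^ 4) (fun _ _ => by positivity)
    (Finset.mem_univ i)

theorem l4p4_le_mul_l2sq {m : ℕ} {v : Fin m → ℝ} {i : Fin m} (hi : ∀ j, v j ^ 2 ≤ v i ^ 2) :
    l4p4 v ≤ v i ^ 2 * l2sq v := by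
  rw [l4p4, l2sq, Finset.mul_sum]
  gcongr with j
  calc v j ^ 4 = v j ^ 2 * v j ^ 2 := by ring
    _ ≤ v i ^ 2 * v j ^ 2 := mul_le_mul_of_nonneg_right (hi j) (sq_nonneg _)

theorem dotProduct_mulVec_eq_transpose {p r : ℕ} (A : Matrix (Fin p) (Fin r) ℝ)
    (w : Fin p → ℝ) (x : Fin r → ℝ) : w ⬝ᵥ (A *ᵥ x) = (Aᵀ *ᵥ w) ⬝ᵥ x := by
  rw [dotProduct_mulVec, mulVec_transpose]

theorem l2sq_zeta_le {p r : ℕ} {A : Matrix (Fin p) (Fin r) ℝ} (hA : Aᵀ * A = 1)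
    (q : Fin p → ℝ) : l2sq (zeta A q) ≤ l2sq q := by
  have hAζ : (A *ᵥ zeta A q) ⬝ᵥ (A *ᵥ zeta A q) = zeta A q ⬝ᵥ zeta A q := by
    rw [dotProduct_mulVec_eq_transpose, mulVec_mulVec, hA, one_mulVec]
  have hqAζ : q ⬝ᵥ (A *ᵥ zeta A q) = zeta A q ⬝ᵥ zeta A q :=
    dotProduct_mulVec_eq_transpose A q _
  have h := dotProduct_self_star_nonneg (q - A *ᵥ zeta A q)
  simp only [star_trivial, dotProduct_sub, sub_dotProduct, hAζ, hqAζ,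
    dotProduct_comm (A *ᵥ zeta A q) q] at h
  rw [l2sq_eq_dotProduct, l2sq_eq_dotProduct]
  linarith

theorem qform_le_opNorm_mul_l2sq {p : ℕ} (M : Matrix (Fin p) (Fin p) ℝ) (v : Fin p → ℝ) :
    qform M v ≤ opNorm M * l2sq v := by
  set T := LinearMap.toContinuousLinearMap (toEuclideanLin M)
  set x : EuclideanSpace ℝ (Fin p) := WithLp.toLp 2 v
  have hq : qform M v = inner ℝ x (T x) := by
    simp [qform, T, x, EuclideanSpace.inner_eq_star_dotProduct, dotProduct_comm]
  have hx : ‖x‖ ^ 2 = l2sq v := by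
    simp [EuclideanSpace.norm_sq_eq, l2sq, x]
  calc qform M v ≤ ‖x‖ * ‖T x‖ := hq ▸ real_inner_le_norm _ _
    _ ≤ ‖x‖ * (‖T‖ * ‖x‖) := by gcongr; exact T.le_opNorm x
    _ = opNorm M * l2sq v := by rw [← hx, opNorm]; ring

theorem l2sq_smul {m : ℕ} (c : ℝ) (v : Fin m → ℝ) : l2sq (c • v) = c ^ 2 * l2sq v := by
  simp [l2sq, Finset.mul_sum, mul_pow]

theorem qform_smul {p : ℕ} (M : Matrix (Fin p) (Fin p) ℝ) (c : ℝ) (v : Fin p → ℝ) :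
    qform M (c • v) = c ^ 2 * qform M v := by
  simp only [qform, mulVec_smul, dotProduct_smul, smul_dotProduct, smul_eq_mul]
  ring

theorem exists_unit_qform_le {p : ℕ} {M : Matrix (Fin p) (Fin p) ℝ} {w : Fin p → ℝ} {c : ℝ}
    (hw : 0 < l2sq w) (hMw : qform M w ≤ c * l2sq w) :
    ∃ v, l2sq v = 1 ∧ qform M v ≤ c := by
  have hsq : (√(l2sq w))⁻¹ ^ 2 = (l2sq w)⁻¹ := by rw [inv_pow, sq_sqrt hw.le]
  refine ⟨(√(l2sq w))⁻¹ • w, ?_, ?_⟩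
  · rw [l2sq_smul, hsq, inv_mul_cancel₀ hw.ne']
  · rw [qform_smul, hsq, inv_mul_le_iff₀ hw, mul_comm]
    exact hMw

theorem proj_mulVec_of_dotProduct_eq_zero {p : ℕ} {q w : Fin p → ℝ} (hqw : q ⬝ᵥ w = 0) :
    proj q *ᵥ w = w := by
  simp [proj, sub_mulVec, vecMulVec_mulVec, hqw]

theorem qform_proj_mul_mul_proj {p : ℕ} {q w : Fin p → ℝ} (hqw : q ⬝ᵥ w = 0)
    (Z : Matrix (Fin p) (Fin p) ℝ) : qform (proj q * Z * proj q) w = qform Z w := by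
  have hwP : w ᵥ* proj q = w := by
    simp [proj, vecMul_sub, vecMul_vecMulVec, dotProduct_comm w q, hqw]
  rw [qform, qform, ← mulVec_mulVec, ← mulVec_mulVec, proj_mulVec_of_dotProduct_eq_zero hqw,
    dotProduct_mulVec, hwP]

theorem qform_hessf_of_dotProduct_eq_zero {p r : ℕ} (θ : ℝ) (A : Matrix (Fin p) (Fin r) ℝ)
    {q w : Fin p → ℝ} (hqw : q ⬝ᵥ w = 0) :
    qform (hessf θ A q) w =
      -((1 - θ) * (3 * ((Aᵀ *ᵥ w) ⬝ᵥ (diagonal (fun j => zeta A q j ^ 2) *ᵥ (Aᵀ *ᵥ w)))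
          - l4p4 (zeta A q) * (w ⬝ᵥ w)))
      - θ * (l2sq (zeta A q) * ((Aᵀ *ᵥ w) ⬝ᵥ (Aᵀ *ᵥ w))
          + 2 * (zeta A q ⬝ᵥ (Aᵀ *ᵥ w)) ^ 2 - l2sq (zeta A q) ^ 2 * (w ⬝ᵥ w)) := by
  have hP := qform_proj_mul_mul_proj hqw
  simp only [qform] at hP ⊢
  simp only [hessf, sub_mulVec, neg_mulVec, smul_mulVec, dotProduct_sub, dotProduct_neg,
    dotProduct_smul, hP]
  have hζ : Aᵀ *ᵥ q = zeta A q := rfl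
  simp only [add_mulVec, smul_mulVec, one_mulVec, dotProduct_add, dotProduct_smul,
    ← mulVec_mulVec, dotProduct_mulVec_eq_transpose A w, vecMulVec_mulVec, op_smul_eq_smul,
    mulVec_smul, dotProduct_mulVec_eq_transpose A q, hζ, smul_eq_mul]
  rw [dotProduct_comm (Aᵀ *ᵥ w) (zeta A q)]
  ring

section SingleSubSmul

variable {m : ℕ} (v : Fin m → ℝ) (i : Fin m)

theorem dotProduct_single_sub_smul_self :
    (Pi.single i 1 - v i • v) ⬝ᵥ (Pi.single i 1 - v i • v) =
      1 - 2 * v i ^ 2 + v i ^ 2 * l2sq v := by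
  simp only [dotProduct_sub, sub_dotProduct, dotProduct_smul, smul_dotProduct, single_dotProduct,
    dotProduct_single, Pi.sub_apply, Pi.smul_apply, Pi.single_eq_same, smul_eq_mul,
    ← l2sq_eq_dotProduct]
  ring

theorem dotProduct_single_sub_smul :
    v ⬝ᵥ (Pi.single i 1 - v i • v) = v i * (1 - l2sq v) := by
  simp only [dotProduct_sub, dotProduct_smul, dotProduct_single, smul_eq_mul,
    ← l2sq_eq_dotProduct]
  ring

theorem dotProduct_diagonal_sq_single_sub_smul :
    (Pi.single i 1 - v i • v) ⬝ᵥ (diagonal (fun j => v j ^ 2) *ᵥ (Pi.single i 1 - v i • v)) =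
      v i ^ 2 - 2 * (v i ^ 2) ^ 2 + v i ^ 2 * l4p4 v := by
  have hl4 : v ⬝ᵥ (diagonal (fun j => v j ^ 2) *ᵥ v) = l4p4 v := by
    simp only [dotProduct, mulVec_diagonal, l4p4]
    exact Finset.sum_congr rfl fun j _ => by ring
  simp only [mulVec_sub, mulVec_smul, diagonal_mulVec_single, dotProduct_sub, sub_dotProduct,
    dotProduct_smul, smul_dotProduct, single_dotProduct, dotProduct_single, Pi.single_eq_same,
    Pi.sub_apply, Pi.smul_apply, smul_eq_mul, hl4, mulVec_diagonal]
  ring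

end SingleSubSmul

def projColumn {p r : ℕ} (A : Matrix (Fin p) (Fin r) ℝ) (q : Fin p → ℝ) (i : Fin r) :
    Fin p → ℝ :=
  proj q *ᵥ (A *ᵥ Pi.single i 1)

section ProjColumn

variable {p r : ℕ} {A : Matrix (Fin p) (Fin r) ℝ} {q : Fin p → ℝ} (i : Fin r)

theorem projColumn_eq : projColumn A q i = A *ᵥ Pi.single i 1 - zeta A q i • q := by
  rw [projColumn, proj, sub_mulVec, one_mulVec, vecMulVec_mulVec, op_smul_eq_smul,
    dotProduct_mulVec_eq_transpose, dotProduct_single, mul_one]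
  rfl

theorem dotProduct_projColumn (hq : l2sq q = 1) : q ⬝ᵥ projColumn A q i = 0 := by
  rw [projColumn_eq, dotProduct_sub, dotProduct_smul, ← l2sq_eq_dotProduct, hq,
    dotProduct_mulVec_eq_transpose, dotProduct_single]
  simp [zeta]

theorem transpose_mulVec_projColumn (hA : Aᵀ * A = 1) :
    Aᵀ *ᵥ projColumn A q i = Pi.single i 1 - zeta A q i • zeta A q := by
  rw [projColumn_eq, mulVec_sub, mulVec_mulVec, hA, one_mulVec, mulVec_smul]
  rfl

theorem l2sq_projColumn (hA : Aᵀ * A = 1) (hq : l2sq q = 1) :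
    l2sq (projColumn A q i) = 1 - zeta A q i ^ 2 := by
  have hcol : (A *ᵥ Pi.single i 1) ⬝ᵥ (A *ᵥ Pi.single i 1) = 1 := by
    rw [dotProduct_mulVec_eq_transpose, mulVec_mulVec, hA, one_mulVec, dotProduct_single,
      Pi.single_eq_same, mul_one]
  have hqcol : q ⬝ᵥ (A *ᵥ Pi.single i 1) = zeta A q i := by
    rw [dotProduct_mulVec_eq_transpose, dotProduct_single, mul_one]
    rfl
  rw [l2sq_eq_dotProduct] at hq ⊢
  rw [projColumn_eq, dotProduct_sub, sub_dotProduct, sub_dotProduct, dotProduct_smul,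
    smul_dotProduct, smul_dotProduct, dotProduct_smul, dotProduct_comm _ q, hcol, hqcol, hq]
  simp only [smul_eq_mul]
  ring

end ProjColumn

theorem curvature_polynomial_le {θ s t u : ℝ} (hθ0 : 0 ≤ θ) (hθ1 : θ ≤ 1) (hs0 : 0 ≤ s)
    (hs : s ≤ 1/2) (hst : s ≤ t) (ht : t ≤ 1) (hu1 : s ^ 2 ≤ u) (hu2 : u ≤ s * t) :
    -((1 - θ) * (3 * (s - 2 * s ^ 2 + s * u) - u * (1 - s)))
      - θ * (t * (1 - 2 * s + s * t) + 2 * s * (1 - t) ^ 2 - t ^ 2 * (1 - s))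
      ≤ -((1 - θ) * (s * (1 - s))) := by
  have h_coord : s * (1 - s) ≤ 3 * (s - 2 * s ^ 2 + s * u) - u * (1 - s) := by
    -- the coefficient 4s - 1 of u changes sign at s = 1/4: bound u by s t below, by s² above
    rcases le_or_gt s (1/4) with h | h
    · nlinarith [mul_nonneg (sub_nonneg.2 hu2) (by linarith : (0:ℝ) ≤ 1 - 4 * s),
        mul_nonneg (mul_nonneg hs0 (sub_nonneg.2 ht)) (by linarith : (0:ℝ) ≤ 1 - 4 * s)]
    · nlinarith [mul_nonneg (sub_nonneg.2 hu1) (by linarith : (0:ℝ) ≤ 4 * s - 1),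
        mul_nonneg (mul_nonneg hs0 (by linarith : (0:ℝ) ≤ 1 - s))
          (by linarith : (0:ℝ) ≤ 1 - 2 * s)]
  have h_iso : 0 ≤ t * (1 - 2 * s + s * t) + 2 * s * (1 - t) ^ 2 - t ^ 2 * (1 - s) := by
    have : 0 ≤ t + 2 * s - 4 * s * t := by
      nlinarith [mul_nonneg (sub_nonneg.2 ht) (by linarith : (0:ℝ) ≤ 1 - 2 * s)]
    nlinarith [mul_nonneg (sub_nonneg.2 ht) this]
  nlinarith [mul_le_mul_of_nonneg_left h_coord (sub_nonneg.2 hθ1), mul_nonneg hθ0 h_iso]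

section NegativeCurvature

variable {p r : ℕ} {A : Matrix (Fin p) (Fin r) ℝ} {q : Fin p → ℝ} {i : Fin r} {θ : ℝ}

theorem qform_hessf_projColumn_le (hA : Aᵀ * A = 1) (hq : l2sq q = 1)
    (hi : ∀ j, zeta A q j ^ 2 ≤ zeta A q i ^ 2) (hθ0 : 0 ≤ θ) (hθ1 : θ ≤ 1)
    (hs : zeta A q i ^ 2 ≤ 1/2) :
    qform (hessf θ A q) (projColumn A q i) ≤
      -((1 - θ) * zeta A q i ^ 2) * l2sq (projColumn A q i) := by
  rw [qform_hessf_of_dotProduct_eq_zero θ A (dotProduct_projColumn i hq),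
    transpose_mulVec_projColumn i hA, dotProduct_diagonal_sq_single_sub_smul,
    dotProduct_single_sub_smul_self, dotProduct_single_sub_smul, ← l2sq_eq_dotProduct,
    l2sq_projColumn i hA hq]
  have key := curvature_polynomial_le hθ0 hθ1 (sq_nonneg _) hs (sq_le_l2sq _ i)
    ((l2sq_zeta_le hA q).trans hq.le) (sq_sq_le_l4p4 _ i) (l4p4_le_mul_l2sq hi)
  linarith

theorem exists_unit_qform_hessf_le (hA : Aᵀ * A = 1) (hq : l2sq q = 1)
    (hi : ∀ j, zeta A q j ^ 2 ≤ zeta A q i ^ 2) (hθ0 : 0 ≤ θ) (hθ1 : θ ≤ 1)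
    (hs : zeta A q i ^ 2 ≤ 1/2) :
    ∃ v, l2sq v = 1 ∧ qform (hessf θ A q) v ≤ -((1 - θ) * zeta A q i ^ 2) :=
  exists_unit_qform_le (by rw [l2sq_projColumn i hA hq]; linarith)
    (qform_hessf_projColumn_le hA hq hi hθ0 hθ1 hs)

end NegativeCurvature

theorem stmt9_general (p r n : ℕ) (hr : 1 ≤ r)
    (A : Matrix (Fin p) (Fin r) ℝ) (hA : Aᵀ * A = 1)
    (X : Matrix (Fin r) (Fin n) ℝ)
    (θ σ cstar Cstar δ2 : ℝ) (hθ0 : 0 < θ)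
    (hc0 : 0 < cstar) (hC : Cstar ≤ 12/25 - 2*θ)
    (q : Fin p → ℝ) (hq : l2sq q = 1)
    (hlow : cstar < linfSq (zeta A q)) (hhigh : linfSq (zeta A q) < Cstar)
    (hδ : opNorm (hessF θ σ A X q - hessf θ A q) ≤ δ2) (hδ2 : δ2 ≤ cstar/25) :
    (∃ v : Fin p → ℝ, qform (hessF θ σ A X q) v < 0) ∧
    (θ ≤ 1/9 → Cstar ≤ 1/4 →
      ∃ v : Fin p → ℝ, l2sq v = 1 ∧
        qform (hessF θ σ A X q) v < -(21/100) * linfSq (zeta A q) ∧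
        -(21/100) * linfSq (zeta A q) < -cstar/5) := by
  have : Nonempty (Fin r) := ⟨⟨0, hr⟩⟩
  obtain ⟨i, hi, hsup⟩ := exists_linfSq_eq (zeta A q)
  rw [hsup] at hlow hhigh ⊢
  obtain ⟨v, hv, hfv⟩ :=
    exists_unit_qform_hessf_le hA hq hi hθ0.le (by linarith) (by linarith)
  have hpert := qform_le_opNorm_mul_l2sq (hessF θ σ A X q - hessf θ A q) v
  have hsplit : qform (hessF θ σ A X q) v =
      qform (hessf θ A q) v + qform (hessF θ σ A X q - hessf θ A q) v := by
    simp [qform, sub_mulVec]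
  have hθs : zeta A q i ^ 2 / 4 ≤ (1 - θ) * zeta A q i ^ 2 := by nlinarith
  have hmain : qform (hessF θ σ A X q) v < -(21/100) * zeta A q i ^ 2 := by
    rw [hv, mul_one] at hpert
    linarith
  exact ⟨⟨v, by linarith⟩, fun _ _ => ⟨v, hv, hmain, by linarith⟩⟩

theorem stmt9 (p r n : ℕ) (hr : 1 ≤ r) (hrp : r ≤ p) (hn : 1 ≤ n)
    (A : Matrix (Fin p) (Fin r) ℝ) (hA : Aᵀ * A = 1)
    (X : Matrix (Fin r) (Fin n) ℝ)
    (θ σ cstar Cstar δ2 : ℝ) (hθ0 : 0 < θ) (hθ : θ ≤ 6/25) (hσ : 0 < σ)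
    (hc0 : 0 < cstar) (hcC : cstar < Cstar) (hC : Cstar ≤ 12/25 - 2*θ)
    (q : Fin p → ℝ) (hq : l2sq q = 1)
    (hlow : cstar < linfSq (zeta A q)) (hhigh : linfSq (zeta A q) < Cstar)
    (hδ : opNorm (hessF θ σ A X q - hessf θ A q) ≤ δ2) (hδ2 : δ2 ≤ cstar/25) :
    (∃ v : Fin p → ℝ, qform (hessF θ σ A X q) v < 0) ∧
    (θ ≤ 1/9 → Cstar ≤ 1/4 →
      ∃ v : Fin p → ℝ, l2sq v = 1 ∧
        qform (hessF θ σ A X q) v < -(21/100) * linfSq (zeta A q) ∧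
        -(21/100) * linfSq (zeta A q) < -cstar/5) :=
  stmt9_general p r n hr A hA X θ σ cstar Cstar δ2 hθ0 hc0 hC q hq hlow hhigh hδ hδ2

end
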